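/- Let (G_i)_{i ∈ ι} be a family of groups, let G be their free product, and for each i let A_i denote the image of G_i under the canonical inclusion G_i → G. Then for every index i_0 and every element g of G \ A_{i_0}, the intersection A_{i_0} ∩ g A_{i_0} g⁻¹ is trivial. In particular each free factor A_{i_0} is malnormal in G. -/

import Mathlib

/-- The conjugate subgroup `g H g⁻¹`. -/
def conjSub {G : Type*} [Group G] (g : G) (H : Subgroup G) : Subgroup G :=
  H.map (MulAut.conj g).toMonoidHom

/-- A subgroup `H` of `G` is malnormal if for every `g ∉ H` the
intersection `H ∩ gHg⁻¹` is trivial. -/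
def Malnormal {G : Type*} [Group G] (H : Subgroup G) : Prop :=
  ∀ g : G, g ∉ H → H ⊓ conjSub g H = ⊥

/-!
Suppose `of a * g = g * of b` with `b ≠ 1` and `g ∉ (of : G i →* _).range`. Splitting the
leading `G i`-letter off the normal form of `g⁻¹` gives `g = w * of m` with `w` a nonempty reduced
word whose last letter is not in `G i`, and then `of a * w = w * of (m * b * m⁻¹)`. The right-hand
side is the reduced word `w` followed by a letter of `G i`, whereas left multiplication by `of a`
does not touch the last letter of `w`; uniqueness of reduced words gives a contradiction.
-/

namespace Monoid.CoprodI

variable {ι : Type*}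

section Monoid

variable {M : ι → Type*} [∀ i, Monoid (M i)] [∀ i, DecidableEq (M i)]

theorem Word.getLast?_rcons {i : ι} (p : Word.Pair M i) :
    (Word.rcons p).toList.getLast? =
      p.tail.toList.getLast?.or (if p.head = 1 then none else some ⟨i, p.head⟩) := by
  unfold Word.rcons
  split_ifs <;> simp [List.getLast?_cons]

variable [DecidableEq ι]

theorem Word.getLast?_of_smul {i : ι} (m : M i) {w : Word M} {l : Σ i, M i}
    (hl : w.toList.getLast? = some l) (hli : l.1 ≠ i) :
    (of m • w).toList.getLast? = some l := by
  set p := Word.equivPair i w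
  have htail : p.tail.toList.getLast? = some l := by
    rw [← (Word.equivPair i).symm_apply_apply w, Word.equivPair_symm, getLast?_rcons] at hl
    rcases ht : p.tail.toList.getLast? with _ | l'
    · rw [ht, Option.none_or] at hl
      split_ifs at hl
      cases hl
      exact absurd rfl hli
    · rwa [ht, Option.some_or] at hl
  rw [of_smul_def, getLast?_rcons, htail, Option.some_or]

theorem NeWord.of_mul_prod_ne_prod_mul_of {i j k : ι} (w : NeWord M j k) (hk : k ≠ i) (a : M i)
    {b : M i} (hb : b ≠ 1) : of a * w.prod ≠ w.prod * of b := by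
  intro h
  have hwords : of a • w.toWord = (w.append hk (NeWord.singleton b hb)).toWord := by
    apply Word.equiv.symm.injective
    change (of a • w.toWord).prod = (w.append hk (NeWord.singleton b hb)).prod
    rw [Word.prod_smul, NeWord.append_prod, NeWord.prod_singleton]
    exact h
  have hlast := congrArg (fun v : Word M => v.toList.getLast?) hwords
  rw [Word.getLast?_of_smul (w := w.toWord) a w.toList_getLast? hk] at hlast
  simp only [NeWord.toWord, NeWord.toList_getLast?, Option.some.injEq, Sigma.mk.injEq] at hlast
  exact hk hlast.1

end Monoid

variable {G : ι → Type*} [∀ i, Group (G i)]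

theorem exists_eq_neWord_prod_mul_of {i : ι} {g : CoprodI G}
    (hg : g ∉ (of : G i →* CoprodI G).range) :
    ∃ (j k : ι) (w : NeWord G j k) (m : G i), k ≠ i ∧ g = w.prod * of m := by
  classical
  set p := Word.equivPair i (Word.equiv g⁻¹)
  have hp : of p.head * p.tail.prod = g⁻¹ := by
    rw [← Word.prod_rcons, ← Word.equivPair_symm, Equiv.symm_apply_apply]
    exact Word.equiv.symm_apply_apply g⁻¹
  have htail : p.tail ≠ Word.empty := by
    intro h
    rw [h, Word.prod_empty, mul_one] at hp
    exact hg ⟨p.head⁻¹, by rw [map_inv, hp, inv_inv]⟩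
  obtain ⟨j, k, w, hw⟩ := NeWord.of_word p.tail htail
  refine ⟨k, j, w.inv, p.head⁻¹, ?_, ?_⟩
  · simpa [Word.fstIdx, NeWord.toWord, ← hw] using p.fstIdx_ne
  · rw [NeWord.inv_prod, map_inv, ← mul_inv_rev, ← inv_inv g, ← hp, ← hw]
    rfl

theorem mem_range_of_of_mul_eq_mul_of {i : ι} {g : CoprodI G} {a b : G i} (hb : b ≠ 1)
    (h : of a * g = g * of b) : g ∈ (of : G i →* CoprodI G).range := by
  classical
  by_contra hg
  obtain ⟨j, k, w, m, hk, rfl⟩ := exists_eq_neWord_prod_mul_of hg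
  refine w.of_mul_prod_ne_prod_mul_of hk a (b := m * b * m⁻¹) (by simpa using hb) ?_
  calc of a * w.prod = of a * (w.prod * of m) * of m⁻¹ := by simp [mul_assoc]
    _ = w.prod * of (m * b * m⁻¹) := by simp [h, mul_assoc]

theorem malnormal_range_of (i : ι) : Malnormal (of : G i →* CoprodI G).range := by
  intro g hg
  rw [eq_bot_iff]
  rintro _ ⟨⟨a, rfl⟩, hconj⟩
  obtain ⟨_, ⟨b, rfl⟩, hab⟩ := Subgroup.mem_map.1 hconj
  simp only [MulEquiv.toMonoidHom_eq_coe, MonoidHom.coe_coe, MulAut.conj_apply] at hab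
  by_cases hb : b = 1
  · simp [← hab, hb]
  · refine absurd (mem_range_of_of_mul_eq_mul_of (a := a) hb ?_) hg
    rw [← hab]
    group

end Monoid.CoprodI

/-- In a free product `G = ∗ᵢ Gᵢ`, each free factor `A_{i₀}` (the image of
`G_{i₀}` under the canonical inclusion) satisfies `A_{i₀} ∩ g A_{i₀} g⁻¹ = 1`
for every `g ∉ A_{i₀}`; in particular every free factor is malnormal. -/
theorem freeFactor_malnormal {ι : Type*} (G : ι → Type*) [∀ i, Group (G i)]
    (i₀ : ι) :
    (∀ g : Monoid.CoprodI G,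
        g ∉ (Monoid.CoprodI.of : G i₀ →* Monoid.CoprodI G).range →
        (Monoid.CoprodI.of : G i₀ →* Monoid.CoprodI G).range ⊓
          conjSub g (Monoid.CoprodI.of : G i₀ →* Monoid.CoprodI G).range = ⊥) ∧
      Malnormal (Monoid.CoprodI.of : G i₀ →* Monoid.CoprodI G).range :=
  ⟨Monoid.CoprodI.malnormal_range_of i₀, Monoid.CoprodI.malnormal_range_of i₀⟩
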